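/- If u₁ and u₂ are nonzero isotropic vectors of the Hermitian form β spanning distinct 1-dimensional subspaces of F_{q^2}^3, then the 2-dimensional subspace ⟨u₁, u₂⟩ contains exactly q+1 absolute points (1-dimensional subspaces spanned by isotropic vectors). -/

import Mathlib

/-!
Put `c = β(u₁, u₂)`. The points of the line `⟨u₁, u₂⟩` are `⟨u₁⟩` and the `⟨a u₁ + u₂⟩`,
`a ∈ F_{q²}`, and `β(a u₁ + u₂, a u₁ + u₂) = T(a c)` with `T(t) = t + t^q`.

If `c` were `0`, the functionals `β(·, u₁)` and `β(·, u₂)` would both lie in the 1-dimensional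
annihilator of the plane `⟨u₁, u₂⟩`, hence be proportional; as the coefficients of `β(·, u)` are
`±` the `q`-th powers of the coordinates of `u`, this would force `u₂ ∈ ⟨u₁⟩`. So `c ≠ 0`, and the
isotropic points other than `⟨u₁⟩` are counted by `ker T`.

Both `ker T` and `im T ⊆ {s | s^q = s}` are root sets of polynomials of degree `q`, and
`|ker T| · |im T| = q²`, so `|ker T| = q`.
-/

/-- The Hermitian form `β(u,v) = -x₁x₂^q + y₁z₂^q + z₁y₂^q` on `F_{q²}³`. -/
def herm {K : Type*} [Field K] (q : ℕ) (u v : Fin 3 → K) : K :=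
  -(u 0 * v 0 ^ q) + u 1 * v 2 ^ q + u 2 * v 1 ^ q

open Module Polynomial Submodule

section Frobenius

variable {K : Type*} [Field K] {q : ℕ}

theorem ncard_setOf_pow_eq_mul_le (hq : 2 ≤ q) (c : K) : {t : K | t ^ q = c * t}.ncard ≤ q := by
  classical
  set P : K[X] := X ^ q - C c * X
  have hdeg : P.natDegree = q := by
    unfold P; compute_degree!
    · rw [if_neg (by omega)]; simp
    all_goals omega
  have hP : P ≠ 0 := by
    intro h; rw [h, natDegree_zero] at hdeg; omega
  have hsub : {t : K | t ^ q = c * t} ⊆ ↑P.roots.toFinset := by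
    intro t (ht : t ^ q = c * t)
    simp [P, hP, ht]
  calc {t : K | t ^ q = c * t}.ncard ≤ P.roots.toFinset.card := by
        simpa using Set.ncard_le_ncard hsub
    _ ≤ Multiset.card P.roots := Multiset.toFinset_card_le _
    _ ≤ q := hdeg ▸ card_roots' P

theorem pow_pow_eq_self_of_card_eq_sq [Fintype K] (hcard : Fintype.card K = q ^ 2) (x : K) :
    (x ^ q) ^ q = x := by
  rw [← pow_mul, ← sq, ← hcard, FiniteField.pow_card]

variable (hadd : ∀ x y : K, (x + y) ^ q = x ^ q + y ^ q)
include hadd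

theorem zero_pow_of_pow_add : (0 : K) ^ q = 0 := map_zero (AddMonoidHom.mk' (· ^ q) hadd)

theorem neg_pow_of_pow_add (x : K) : (-x) ^ q = -x ^ q := map_neg (AddMonoidHom.mk' (· ^ q) hadd) x

theorem ncard_setOf_add_pow_eq_zero [Fintype K] (hcard : Fintype.card K = q ^ 2) :
    {t : K | t + t ^ q = 0}.ncard = q := by
  have hinv := pow_pow_eq_self_of_card_eq_sq hcard
  have hq : 2 ≤ q := by
    have := hcard ▸ Fintype.one_lt_card (α := K)
    by_contra! h; interval_cases q <;> simp at this
  let T : K →+ K := AddMonoidHom.mk' (fun t => t + t ^ q) fun x y => by rw [hadd]; ring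
  have hker : Nat.card T.ker = {t : K | t + t ^ q = 0}.ncard := Nat.card_coe_set_eq _
  have hker_le : {t : K | t + t ^ q = 0}.ncard ≤ q := by
    refine (Set.ncard_le_ncard fun t (ht : t + t ^ q = 0) => ?_).trans
      (ncard_setOf_pow_eq_mul_le hq (-1))
    show t ^ q = -1 * t
    linear_combination ht
  have hrange_le : Nat.card T.range ≤ q := by
    rw [← SetLike.coe_sort_coe, Nat.card_coe_set_eq]
    refine (Set.ncard_le_ncard ?_).trans (ncard_setOf_pow_eq_mul_le hq 1)
    rintro _ ⟨t, rfl⟩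
    simp [T, hadd, hinv, add_comm]
  have hprod : Nat.card T.ker * Nat.card T.range = q * q := by
    rw [← AddSubgroup.index_ker T, AddSubgroup.card_mul_index, Nat.card_eq_fintype_card, hcard,
      sq]
  rw [hker] at hprod
  exact le_antisymm hker_le <| le_of_not_gt fun h =>
    (Nat.mul_lt_mul_of_lt_of_le h hrange_le (by omega)).ne hprod

theorem ncard_setOf_mul_add_pow_eq_zero [Fintype K] (hcard : Fintype.card K = q ^ 2) {c : K}
    (hc : c ≠ 0) : {a : K | a * c + (a * c) ^ q = 0}.ncard = q :=
  (Set.ncard_preimage_of_injective_subset_range (s := {t : K | t + t ^ q = 0})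
    (mul_left_injective₀ hc) fun t _ => ⟨t / c, div_mul_cancel₀ t hc⟩).trans
    (ncard_setOf_add_pow_eq_zero hadd hcard)

end Frobenius

section Lines

variable {K V : Type*} [Field K] [AddCommGroup V] [Module K V] {u v : V}

theorem linearIndependent_pair_of_span_singleton_ne (hu : u ≠ 0) (hv : v ≠ 0)
    (h : span K {u} ≠ span K {v}) : LinearIndependent K ![u, v] := by
  rw [LinearIndependent.pair_iff' hu]
  rintro a rfl
  have ha : a ≠ 0 := by rintro rfl; exact hv (zero_smul K u)
  exact h (span_singleton_smul_eq ha.isUnit u).symm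

theorem span_singleton_eq_or_eq_smul_smul_add {w : V} (hw : w ∈ span K {u, v}) (hw0 : w ≠ 0) :
    span K {w} = span K {u} ∨ ∃ a b : K, b ≠ 0 ∧ w = b • (a • u + v) := by
  obtain ⟨a, b, rfl⟩ := mem_span_pair.mp hw
  by_cases hb : b = 0
  · subst hb
    have ha : a ≠ 0 := by rintro rfl; simp at hw0
    left
    simpa using span_singleton_smul_eq ha.isUnit u
  · right
    refine ⟨a / b, b, hb, ?_⟩
    rw [smul_add, smul_smul, mul_div_cancel₀ a hb]

theorem exists_eq_smul_of_mem_dualAnnihilator [FiniteDimensional K V] {W : Submodule K V}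
    (hW : finrank K W + 1 = finrank K V) {f g : Dual K V} (hf : f ∈ W.dualAnnihilator)
    (hg : g ∈ W.dualAnnihilator) (hf0 : f ≠ 0) :
    ∃ l : K, g = l • f := by
  have hdim : finrank K W.dualAnnihilator = 1 := by
    have := Subspace.finrank_add_finrank_dualAnnihilator_eq W
    omega
  obtain ⟨l, hl⟩ := (finrank_eq_one_iff_of_nonzero' (⟨f, hf⟩ : W.dualAnnihilator)
    (by simpa using hf0)).mp hdim ⟨g, hg⟩
  exact ⟨l, (congrArg Subtype.val hl).symm⟩

variable (hind : LinearIndependent K ![u, v])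
include hind

theorem span_smul_add_injective : Function.Injective fun a : K => span K {a • u + v} := by
  intro a b hab
  obtain ⟨z, hz⟩ := span_singleton_eq_span_singleton.mp hab
  rw [Units.smul_def] at hz
  have h := LinearIndependent.pair_iff.mp hind ((z : K) * a - b) ((z : K) - 1)
    (by linear_combination (norm := module) hz)
  linear_combination h.1 - a * h.2

theorem span_smul_add_ne_span_left (a : K) : span K {a • u + v} ≠ span K {u} := by
  intro h
  obtain ⟨z, hz⟩ := span_singleton_eq_span_singleton.mp h
  rw [Units.smul_def] at hz
  have h := LinearIndependent.pair_iff.mp hind ((z : K) * a - 1) (z : K)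
    (by linear_combination (norm := module) hz)
  exact z.ne_zero h.2

end Lines

section Hermitian

variable {K : Type*} [Field K] {q : ℕ}

def absolutePoints (K : Type*) [Field K] (q : ℕ) : Set (Submodule K (Fin 3 → K)) :=
  {W | ∃ w : Fin 3 → K, w ≠ 0 ∧ herm q w w = 0 ∧ W = span K {w}}

def hermDual (q : ℕ) (u : Fin 3 → K) : Dual K (Fin 3 → K) where
  toFun v := herm q v u
  map_add' v w := by simp only [herm, Pi.add_apply]; ring
  map_smul' a v := by simp only [herm, Pi.smul_apply, smul_eq_mul, RingHom.id_apply]; ring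

@[simp]
theorem hermDual_apply (u v : Fin 3 → K) : hermDual q u v = herm q v u := rfl

theorem herm_smul_smul (a b : K) (u v : Fin 3 → K) :
    herm q (a • u) (b • v) = a * b ^ q * herm q u v := by
  simp only [herm, Pi.smul_apply, smul_eq_mul, mul_pow]; ring

theorem pow_apply_eq_mul_of_hermDual_eq_smul {u v : Fin 3 → K} {l : K}
    (h : hermDual q v = l • hermDual q u) (i : Fin 3) : v i ^ q = l * u i ^ q := by
  have h0 := congrArg (· (Pi.single 0 1)) h
  have h1 := congrArg (· (Pi.single 1 1)) h
  have h2 := congrArg (· (Pi.single 2 1)) h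
  simp only [Fin.isValue, hermDual_apply, herm, LinearMap.smul_apply, smul_eq_mul,
    Pi.single_eq_same, Pi.single_eq_of_ne, Fin.reduceEq, ne_eq, not_false_eq_true, one_ne_zero,
    zero_ne_one, one_mul, zero_mul, add_zero, zero_add, neg_zero, mul_neg, neg_inj] at h0 h1 h2
  fin_cases i
  · exact h0
  · exact h2
  · exact h1

theorem hermDual_ne_zero {u : Fin 3 → K} (hu : u ≠ 0) : hermDual q u ≠ 0 := fun h =>
  hu <| funext fun i => eq_zero_of_pow_eq_zero <|
    (pow_apply_eq_mul_of_hermDual_eq_smul (h.trans (zero_smul K (hermDual q u)).symm) i).trans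
      (zero_mul _)

theorem eq_smul_of_hermDual_eq_smul (hinv : ∀ x : K, (x ^ q) ^ q = x) {u v : Fin 3 → K} {l : K}
    (h : hermDual q v = l • hermDual q u) : v = l ^ q • u := funext fun i => by
  simpa [hinv, mul_pow] using congrArg (· ^ q) (pow_apply_eq_mul_of_hermDual_eq_smul h i)

variable (hadd : ∀ x y : K, (x + y) ^ q = x ^ q + y ^ q) (hinv : ∀ x : K, (x ^ q) ^ q = x)
include hadd hinv

theorem herm_swap (u v : Fin 3 → K) : herm q v u = herm q u v ^ q := by
  simp only [herm, hadd, neg_pow_of_pow_add hadd, mul_pow, hinv]; ring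

theorem herm_smul_add_self {u v : Fin 3 → K} (hu : herm q u u = 0) (hv : herm q v v = 0) (a : K) :
    herm q (a • u + v) (a • u + v) = a * herm q u v + (a * herm q u v) ^ q := by
  simp only [herm, Pi.add_apply, Pi.smul_apply, smul_eq_mul] at hu hv ⊢
  simp only [hadd, neg_pow_of_pow_add hadd, mul_pow, hinv]
  linear_combination (a * a ^ q) * hu + hv

theorem herm_ne_zero_of_isotropic {u v : Fin 3 → K} (hind : LinearIndependent K ![u, v])
    (hu : herm q u u = 0) (hv : herm q v v = 0) : herm q u v ≠ 0 := by
  intro hc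
  have hW : finrank K (span K {u, v}) + 1 = finrank K (Fin 3 → K) := by
    rw [← Matrix.range_cons_cons_empty u v ![], finrank_span_eq_card hind]
    simp
  have mem_dualAnnihilator (w : Fin 3 → K) (huw : herm q u w = 0) (hvw : herm q v w = 0) :
      hermDual q w ∈ (span K {u, v}).dualAnnihilator := by
    rw [← SetLike.mem_coe, coe_dualAnnihilator_span]
    simp [Set.insert_subset_iff, huw, hvw]
  obtain ⟨l, hl⟩ := exists_eq_smul_of_mem_dualAnnihilator hW
    (mem_dualAnnihilator u hu (by rw [herm_swap hadd hinv, hc, zero_pow_of_pow_add hadd]))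
    (mem_dualAnnihilator v hc hv)
    (hermDual_ne_zero (hind.ne_zero 0))
  have := LinearIndependent.pair_iff.mp hind (l ^ q) (-1)
    (by rw [eq_smul_of_hermDual_eq_smul hinv hl]; module)
  exact one_ne_zero (neg_eq_zero.mp this.2)

theorem absolutePoints_inter_Iic_span_pair {u v : Fin 3 → K}
    (hind : LinearIndependent K ![u, v]) (hu : herm q u u = 0) (hv : herm q v v = 0) :
    absolutePoints K q ∩ Set.Iic (span K {u, v}) =
      insert (span K {u}) ((fun a : K => span K {a • u + v}) ''
        {a | a * herm q u v + (a * herm q u v) ^ q = 0}) := by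
  ext W
  constructor
  · rintro ⟨⟨w, hw0, hww, rfl⟩, hle⟩
    rcases span_singleton_eq_or_eq_smul_smul_add (hle (mem_span_singleton_self w)) hw0 with
      h | ⟨a, b, hb, rfl⟩
    · exact Or.inl h
    · refine Or.inr ⟨a, ?_, (span_singleton_smul_eq hb.isUnit _).symm⟩
      rw [herm_smul_smul] at hww
      show _ = 0
      rw [← herm_smul_add_self hadd hinv hu hv]
      simpa [hb] using hww
  · rintro (rfl | ⟨a, ha, rfl⟩)
    · exact ⟨⟨u, hind.ne_zero 0, hu, rfl⟩, span_mono (by simp)⟩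
    · refine ⟨⟨a • u + v, fun h => ?_, ?_, rfl⟩, ?_⟩
      · exact one_ne_zero (LinearIndependent.pair_iff.mp hind a 1 (by simpa using h)).2
      · rw [herm_smul_add_self hadd hinv hu hv]; exact ha
      · rw [Set.mem_Iic, span_singleton_le_iff_mem]
        exact mem_span_pair.mpr ⟨a, 1, by rw [one_smul]⟩

end Hermitian

theorem card_absolute_points_on_secant_general
    (p e q : ℕ) (hp : p.Prime) (hq : q = p ^ e)
    (K : Type) [Field K] [Fintype K]
    (hcard : Fintype.card K = q ^ 2)
    (u₁ u₂ : Fin 3 → K) (h1 : u₁ ≠ 0) (h2 : u₂ ≠ 0)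
    (hiso1 : herm q u₁ u₁ = 0) (hiso2 : herm q u₂ u₂ = 0)
    (hdist : Submodule.span K {u₁} ≠ Submodule.span K {u₂}) :
    Nat.card {W : Submodule K (Fin 3 → K) //
        (∃ w : Fin 3 → K, w ≠ 0 ∧ herm q w w = 0 ∧ W = Submodule.span K {w}) ∧
        W ≤ Submodule.span K {u₁, u₂}}
      = q + 1 := by
  have : Fact p.Prime := ⟨hp⟩
  have : CharP K p := charP_of_card_eq_prime_pow (f := e * 2) (by rw [hcard, hq, pow_mul])
  have hadd (x y : K) : (x + y) ^ q = x ^ q + y ^ q := hq ▸ add_pow_char_pow x y p e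
  have hinv := pow_pow_eq_self_of_card_eq_sq hcard
  have hind := linearIndependent_pair_of_span_singleton_ne h1 h2 hdist
  have hc := herm_ne_zero_of_isotropic hadd hinv hind hiso1 hiso2
  change Nat.card ↥(absolutePoints K q ∩ Set.Iic (span K {u₁, u₂})) = q + 1
  rw [Nat.card_coe_set_eq, absolutePoints_inter_Iic_span_pair hadd hinv hind hiso1 hiso2,
    Set.ncard_insert_of_notMem (by rintro ⟨a, -, h⟩; exact span_smul_add_ne_span_left hind a h),
    Set.ncard_image_of_injective _ (span_smul_add_injective hind),
    ncard_setOf_mul_add_pow_eq_zero hadd hcard hc]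

/-- The 2-dimensional subspace spanned by two isotropic vectors spanning distinct
1-dimensional subspaces contains exactly `q + 1` absolute points. -/
theorem card_absolute_points_on_secant
    (p e q : ℕ) (hp : p.Prime) (he : 0 < e) (hq : q = p ^ e)
    (K : Type) [Field K] [Fintype K]
    (hcard : Fintype.card K = q ^ 2)
    (u₁ u₂ : Fin 3 → K) (h1 : u₁ ≠ 0) (h2 : u₂ ≠ 0)
    (hiso1 : herm q u₁ u₁ = 0) (hiso2 : herm q u₂ u₂ = 0)
    (hdist : Submodule.span K {u₁} ≠ Submodule.span K {u₂}) :
    Nat.card {W : Submodule K (Fin 3 → K) //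
        (∃ w : Fin 3 → K, w ≠ 0 ∧ herm q w w = 0 ∧ W = Submodule.span K {w}) ∧
        W ≤ Submodule.span K {u₁, u₂}}
      = q + 1 :=
  card_absolute_points_on_secant_general p e q hp hq K hcard u₁ u₂ h1 h2 hiso1 hiso2 hdist
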